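/- Let T ≥ 1, d ≥ 1, C ≥ 1. Let v : Fin T → ℝ^d satisfy ‖v_i‖ ≤ V for all i, define h : ℝ^T → ℝ^d by h(ℓ) = Σ_i softmax(ℓ)_i · v_i, let f : ℝ^d → ℝ^C be differentiable with operator norm of its derivative bounded by L at every point (‖Df(x)‖_op ≤ L for all x), and fix a target class y ∈ Fin C. Define the cross-entropy loss L_CE(ℓ) = −log softmax(f(h(ℓ)))_y. Then L_CE is differentiable and for every ℓ ∈ ℝ^T and every index j, |∂L_CE(ℓ)/∂ℓ_j| ≤ 2·L·V·√(2·L_CE(ℓ)). -/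

import Mathlib

set_option maxHeartbeats 4000000


/-- Softmax on a finite index type. -/
noncomputable def softmax {ι : Type*} [Fintype ι] (z : ι → ℝ) (i : ι) : ℝ :=
  Real.exp (z i) / ∑ k, Real.exp (z k)

lemma key_pinsker {t : ℝ} (h0 : 0 < t) (h1 : t ≤ 1) : 2 * (1 - t)^2 ≤ -Real.log t := by
  have l1 := Real.log_le_sub_one_of_pos h0
  have l2 := Real.log_le_sub_one_of_pos (show (0:ℝ) < 2 * t by linarith)
  have l3 := Real.log_le_sub_one_of_pos (show (0:ℝ) < 8 * t by linarith)
  rw [Real.log_mul (by norm_num) (ne_of_gt h0)] at l2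
  rw [Real.log_mul (by norm_num) (ne_of_gt h0)] at l3
  have h8 : Real.log 8 = 3 * Real.log 2 := by
    rw [show (8:ℝ) = 2 ^ (3:ℕ) by norm_num, Real.log_pow]; push_cast; ring
  have hl2 := Real.log_two_gt_d9
  rw [h8] at l3
  rcases le_or_gt t 0.23 with hc | hc
  · nlinarith
  rcases le_or_gt t 0.77 with hc2 | hc2
  · nlinarith
  · nlinarith

lemma sumexp_pos {ι : Type*} [Fintype ι] [Nonempty ι] (z : ι → ℝ) :
    0 < ∑ k, Real.exp (z k) :=
  Finset.sum_pos (fun k _ => Real.exp_pos _) Finset.univ_nonempty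

lemma softmax_pos {ι : Type*} [Fintype ι] [Nonempty ι] (z : ι → ℝ) (i : ι) :
    0 < softmax z i :=
  div_pos (Real.exp_pos _) (sumexp_pos z)

lemma softmax_sum_one {ι : Type*} [Fintype ι] [Nonempty ι] (z : ι → ℝ) :
    ∑ i, softmax z i = 1 := by
  unfold softmax
  rw [← Finset.sum_div]
  exact div_self (ne_of_gt (sumexp_pos z))

lemma softmax_le_one {ι : Type*} [Fintype ι] [Nonempty ι] (z : ι → ℝ) (i : ι) :
    softmax z i ≤ 1 := by
  unfold softmax
  rw [div_le_one (sumexp_pos z)]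
  exact Finset.single_le_sum (f := fun k => Real.exp (z k))
    (fun k _ => (Real.exp_pos _).le) (Finset.mem_univ i)

/-- the Explaining-Away Effect — the task gradient flowing into each
attention logit is bounded by `2·L·V·√(2·L_CE)`, so it vanishes at a square-root
rate as the cross-entropy loss goes to zero. -/
theorem explaining_away_effect
    (T d C : ℕ) (hT : 1 ≤ T) (hd : 1 ≤ d) (hC : 1 ≤ C)
    (v : Fin T → (Fin d → ℝ)) (V : ℝ) (hv : ∀ i, ‖v i‖ ≤ V)
    (h : (Fin T → ℝ) → (Fin d → ℝ))
    (hh : ∀ ℓ, h ℓ = ∑ i, softmax ℓ i • v i)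
    (f : (Fin d → ℝ) → (Fin C → ℝ)) (hf : Differentiable ℝ f)
    (L : ℝ) (hL : ∀ x, ‖fderiv ℝ f x‖ ≤ L)
    (y : Fin C)
    (LCE : (Fin T → ℝ) → ℝ)
    (hLCE : ∀ ℓ, LCE ℓ = -Real.log (softmax (f (h ℓ)) y)) :
    Differentiable ℝ LCE ∧
    (∀ (ℓ : Fin T → ℝ) (j : Fin T),
      |fderiv ℝ LCE ℓ (Pi.single j 1)| ≤ 2 * L * V * Real.sqrt (2 * LCE ℓ)) := by
  haveI hTne : Nonempty (Fin T) := ⟨⟨0, hT⟩⟩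
  haveI hCne : Nonempty (Fin C) := ⟨⟨0, hC⟩⟩
  have hV : 0 ≤ V := le_trans (norm_nonneg _) (hv ⟨0, hT⟩)
  have hLpos : 0 ≤ L := le_trans (norm_nonneg _) (hL 0)
  have hfe : LCE = fun ℓ' => Real.log (∑ k, Real.exp (f (h ℓ') k)) - f (h ℓ') y := by
    funext ℓ'
    rw [hLCE]
    unfold softmax
    rw [Real.log_div (Real.exp_ne_zero _) (ne_of_gt (sumexp_pos _)), Real.log_exp]
    ring
  have main : ∀ ℓ : Fin T → ℝ, ∃ Φ : (Fin T → ℝ) →L[ℝ] ℝ, HasFDerivAt LCE Φ ℓ ∧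
      ∀ j, |Φ (Pi.single j 1)| ≤ 2 * L * V * Real.sqrt (2 * LCE ℓ) := by
    intro ℓ
    set S : ℝ := ∑ k, Real.exp (ℓ k) with hSdef
    have hSpos : 0 < S := sumexp_pos ℓ
    -- derivative of the partition function on T
    have hS : HasFDerivAt (fun z : Fin T → ℝ => ∑ k, Real.exp (z k))
        (∑ k, Real.exp (ℓ k) • ContinuousLinearMap.proj (R := ℝ) (φ := fun _ : Fin T => ℝ) k) ℓ :=
      HasFDerivAt.fun_sum fun k _ => (hasFDerivAt_apply k ℓ).exp
    -- derivative of the unnormalized value sum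
    have hW : HasFDerivAt (fun z : Fin T → ℝ => ∑ i, Real.exp (z i) • v i)
        (∑ i, (Real.exp (ℓ i) • ContinuousLinearMap.proj (R := ℝ)
          (φ := fun _ : Fin T => ℝ) i).smulRight (v i)) ℓ :=
      HasFDerivAt.fun_sum fun i _ => ((hasFDerivAt_apply i ℓ).exp).smul_const (v i)
    have hinv : HasFDerivAt (fun z : Fin T → ℝ => (∑ k, Real.exp (z k))⁻¹)
        ((-(S ^ 2)⁻¹) • ∑ k, Real.exp (ℓ k) • ContinuousLinearMap.proj (R := ℝ)
          (φ := fun _ : Fin T => ℝ) k) ℓ :=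
      (hasDerivAt_inv (ne_of_gt hSpos)).comp_hasFDerivAt ℓ hS
    have hrepr : h = fun z : Fin T → ℝ =>
        (∑ k, Real.exp (z k))⁻¹ • ∑ i, Real.exp (z i) • v i := by
      funext z
      rw [hh, Finset.smul_sum]
      refine Finset.sum_congr rfl fun i _ => ?_
      rw [smul_smul]
      unfold softmax
      rw [div_eq_inv_mul]
    have hhD := hinv.fun_smul hW
    rw [← hrepr] at hhD
    set D := ((∑ k, Real.exp (ℓ k))⁻¹ •
        (∑ i, (Real.exp (ℓ i) • ContinuousLinearMap.proj (R := ℝ)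
          (φ := fun _ : Fin T => ℝ) i).smulRight (v i)) +
        ((-(S ^ 2)⁻¹) • ∑ k, Real.exp (ℓ k) • ContinuousLinearMap.proj (R := ℝ)
          (φ := fun _ : Fin T => ℝ) k).smulRight (∑ i, Real.exp (ℓ i) • v i)) with hDdef
    set F' := fderiv ℝ f (h ℓ) with hF'def
    have hfd : HasFDerivAt f F' (h ℓ) := (hf (h ℓ)).hasFDerivAt
    set z := f (h ℓ) with hzdef
    set SC : ℝ := ∑ k, Real.exp (z k) with hSCdef
    have hSCpos : 0 < SC := sumexp_pos z
    have hSCd : HasFDerivAt (fun w : Fin C → ℝ => ∑ k, Real.exp (w k))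
        (∑ k, Real.exp (z k) • ContinuousLinearMap.proj (R := ℝ)
          (φ := fun _ : Fin C => ℝ) k) z :=
      HasFDerivAt.fun_sum fun k _ => (hasFDerivAt_apply k z).exp
    have hg : HasFDerivAt (fun w : Fin C → ℝ => Real.log (∑ k, Real.exp (w k)) - w y)
        ((SC⁻¹ • ∑ k, Real.exp (z k) • ContinuousLinearMap.proj (R := ℝ)
          (φ := fun _ : Fin C => ℝ) k) - ContinuousLinearMap.proj y) z :=
      (hSCd.log (ne_of_gt hSCpos)).sub (hasFDerivAt_apply y z)
    set G := ((SC⁻¹ • ∑ k, Real.exp (z k) • ContinuousLinearMap.proj (R := ℝ)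
          (φ := fun _ : Fin C => ℝ) k) - ContinuousLinearMap.proj y) with hGdef
    have total : HasFDerivAt LCE (G.comp (F'.comp D)) ℓ := by
      rw [hfe]
      exact hg.comp ℓ (hfd.comp ℓ hhD)
    refine ⟨G.comp (F'.comp D), total, fun j => ?_⟩
    -- evaluate D at the basis vector
    have hS'j : (∑ k, Real.exp (ℓ k) • ContinuousLinearMap.proj (R := ℝ)
        (φ := fun _ : Fin T => ℝ) k) (Pi.single j 1) = Real.exp (ℓ j) := by
      rw [ContinuousLinearMap.sum_apply]
      rw [Finset.sum_eq_single j]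
      · simp
      · intro i _ hij
        simp [Pi.single_apply, hij]
      · intro hj; exact absurd (Finset.mem_univ j) hj
    have hW'j : (∑ i, (Real.exp (ℓ i) • ContinuousLinearMap.proj (R := ℝ)
        (φ := fun _ : Fin T => ℝ) i).smulRight (v i)) (Pi.single j 1)
        = Real.exp (ℓ j) • v j := by
      rw [ContinuousLinearMap.sum_apply]
      rw [Finset.sum_eq_single j]
      · simp
      · intro i _ hij
        simp [Pi.single_apply, hij]
      · intro hj; exact absurd (Finset.mem_univ j) hj
    have hDval : D (Pi.single j 1) = (S⁻¹ * Real.exp (ℓ j)) • v j +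
        (-(S ^ 2)⁻¹ * Real.exp (ℓ j)) • (∑ i, Real.exp (ℓ i) • v i) := by
      rw [hDdef]
      simp only [ContinuousLinearMap.add_apply, ContinuousLinearMap.smul_apply,
        ContinuousLinearMap.smulRight_apply]
      rw [hS'j, hW'j, smul_smul, smul_eq_mul]
    have hexp_le : Real.exp (ℓ j) ≤ S :=
      Finset.single_le_sum (f := fun k => Real.exp (ℓ k))
        (fun k _ => (Real.exp_pos _).le) (Finset.mem_univ j)
    have hWnorm : ‖∑ i, Real.exp (ℓ i) • v i‖ ≤ S * V := by
      calc ‖∑ i, Real.exp (ℓ i) • v i‖ ≤ ∑ i, ‖Real.exp (ℓ i) • v i‖ := norm_sum_le _ _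
        _ ≤ ∑ i, Real.exp (ℓ i) * V := by
            refine Finset.sum_le_sum fun i _ => ?_
            rw [norm_smul, Real.norm_eq_abs, abs_of_pos (Real.exp_pos _)]
            exact mul_le_mul_of_nonneg_left (hv i) (Real.exp_pos _).le
        _ = S * V := by rw [← Finset.sum_mul]
    have hu0 : ‖D (Pi.single j 1)‖ ≤ 2 * V := by
      rw [hDval]
      have h1 : ‖(S⁻¹ * Real.exp (ℓ j)) • v j‖ ≤ V := by
        rw [norm_smul, Real.norm_eq_abs,
          abs_of_pos (by positivity : (0:ℝ) < S⁻¹ * Real.exp (ℓ j))]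
        have := hv j
        have hc1 : S⁻¹ * Real.exp (ℓ j) ≤ 1 := by
          rw [inv_mul_le_iff₀ hSpos]; linarith
        nlinarith [norm_nonneg (v j)]
      have h2 : ‖(-(S ^ 2)⁻¹ * Real.exp (ℓ j)) • (∑ i, Real.exp (ℓ i) • v i)‖ ≤ V := by
        rw [norm_smul, Real.norm_eq_abs]
        have habs : |(-(S ^ 2)⁻¹ * Real.exp (ℓ j))| = (S ^ 2)⁻¹ * Real.exp (ℓ j) := by
          rw [abs_mul, abs_neg, abs_of_pos (by positivity : (0:ℝ) < (S ^ 2)⁻¹),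
            abs_of_pos (Real.exp_pos _)]
        rw [habs]
        calc (S ^ 2)⁻¹ * Real.exp (ℓ j) * ‖∑ i, Real.exp (ℓ i) • v i‖
            ≤ (S ^ 2)⁻¹ * Real.exp (ℓ j) * (S * V) := by
              refine mul_le_mul_of_nonneg_left hWnorm (by positivity)
          _ ≤ V := by
              rw [show (S ^ 2)⁻¹ * Real.exp (ℓ j) * (S * V)
                  = (Real.exp (ℓ j) / S) * V by field_simp]
              have : Real.exp (ℓ j) / S ≤ 1 := by
                rw [div_le_one hSpos]; exact hexp_le
              nlinarith
      calc ‖_ + _‖ ≤ ‖(S⁻¹ * Real.exp (ℓ j)) • v j‖ +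
          ‖(-(S ^ 2)⁻¹ * Real.exp (ℓ j)) • (∑ i, Real.exp (ℓ i) • v i)‖ := norm_add_le _ _
        _ ≤ 2 * V := by linarith
    -- the middle vector
    set w : Fin C → ℝ := F' (D (Pi.single j 1)) with hwdef
    have hwnorm : ‖w‖ ≤ L * (2 * V) := by
      calc ‖w‖ ≤ ‖F'‖ * ‖D (Pi.single j 1)‖ := F'.le_opNorm _
        _ ≤ L * (2 * V) :=
            mul_le_mul (hL _) hu0 (norm_nonneg _) hLpos
    -- evaluate G
    have hGval : (G.comp (F'.comp D)) (Pi.single j 1)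
        = (∑ k, softmax z k * w k) - w y := by
      simp only [ContinuousLinearMap.comp_apply, hGdef, ContinuousLinearMap.sub_apply,
        ContinuousLinearMap.smul_apply, ContinuousLinearMap.sum_apply,
        ContinuousLinearMap.proj_apply, smul_eq_mul, ← hwdef]
      congr 1
      rw [Finset.mul_sum]
      refine Finset.sum_congr rfl fun k _ => ?_
      unfold softmax
      rw [← hSCdef]
      ring
    rw [hGval]
    -- ℓ¹-type bound on the last layer
    have hsum_eq : (∑ k, softmax z k * w k) - w y
        = ∑ k, (softmax z k - if k = y then 1 else 0) * w k := by
      rw [Finset.sum_congr rfl (fun k _ => sub_mul (softmax z k) _ (w k)),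
        Finset.sum_sub_distrib]
      congr 1
      rw [Finset.sum_eq_single y]
      · simp
      · intro k _ hk; simp [hk]
      · intro hy; exact absurd (Finset.mem_univ y) hy
    have hpy0 : 0 < softmax z y := softmax_pos z y
    have hpy1 : softmax z y ≤ 1 := softmax_le_one z y
    have habs_sum : ∑ k, |softmax z k - if k = y then 1 else 0|
        = 2 * (1 - softmax z y) := by
      have heach : ∀ k, |softmax z k - if k = y then 1 else 0|
          = softmax z k + (if k = y then (1:ℝ) else 0)
            - 2 * (if k = y then softmax z k else 0) := by
        intro k
        by_cases hk : k = y
        · subst hk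
          rw [if_pos rfl, if_pos rfl, abs_of_nonpos (by linarith)]
          ring
        · rw [if_neg hk, if_neg hk, sub_zero, mul_zero, sub_zero, add_zero,
            abs_of_pos (softmax_pos z k)]
      have h1' : ∑ k : Fin C, (if k = y then (1:ℝ) else 0) = 1 := by simp
      have h2' : ∑ k : Fin C, (if k = y then softmax z k else 0) = softmax z y := by simp
      rw [Finset.sum_congr rfl fun k _ => heach k]
      rw [Finset.sum_sub_distrib, Finset.sum_add_distrib, softmax_sum_one, h1',
        ← Finset.mul_sum, h2']
      ring
    have hbound1 : |(∑ k, softmax z k * w k) - w y|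
        ≤ 2 * (1 - softmax z y) * ‖w‖ := by
      rw [hsum_eq]
      calc |∑ k, (softmax z k - if k = y then 1 else 0) * w k|
          ≤ ∑ k, |(softmax z k - if k = y then 1 else 0) * w k| :=
            Finset.abs_sum_le_sum_abs _ _
        _ ≤ ∑ k, |softmax z k - if k = y then 1 else 0| * ‖w‖ := by
            refine Finset.sum_le_sum fun k _ => ?_
            rw [abs_mul]
            refine mul_le_mul_of_nonneg_left ?_ (abs_nonneg _)
            rw [← Real.norm_eq_abs]
            exact norm_le_pi_norm w k
        _ = 2 * (1 - softmax z y) * ‖w‖ := by rw [← Finset.sum_mul, habs_sum]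
    -- Pinsker-type bound
    have hLCEeq : LCE ℓ = -Real.log (softmax z y) := hLCE ℓ
    have hkey := key_pinsker hpy0 hpy1
    have hsq : 2 * (1 - softmax z y) ≤ Real.sqrt (2 * LCE ℓ) := by
      have hsq2 : (2 * (1 - softmax z y)) ^ 2 ≤ 2 * LCE ℓ := by
        rw [hLCEeq]; nlinarith
      calc 2 * (1 - softmax z y)
          = Real.sqrt ((2 * (1 - softmax z y)) ^ 2) :=
            (Real.sqrt_sq (by linarith)).symm
        _ ≤ Real.sqrt (2 * LCE ℓ) := Real.sqrt_le_sqrt hsq2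
    have hfin := mul_le_mul hsq hwnorm (norm_nonneg w) (Real.sqrt_nonneg _)
    calc |(∑ k, softmax z k * w k) - w y| ≤ 2 * (1 - softmax z y) * ‖w‖ := hbound1
      _ ≤ Real.sqrt (2 * LCE ℓ) * (L * (2 * V)) := hfin
      _ = 2 * L * V * Real.sqrt (2 * LCE ℓ) := by ring
  constructor
  · intro ℓ
    exact ((main ℓ).choose_spec.1).differentiableAt
  · intro ℓ j
    obtain ⟨Φ, hΦ, hb⟩ := main ℓ
    rw [hΦ.fderiv]
    exact hb j
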